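/- For any real x, the following are equivalent: (1) x is Δ¹₁-semi-traceable and Δ¹₁-dominated; (2) for every g ≤_h x there exist an increasing Δ¹₁ function f and a Δ¹₁ function F : ω → [ω]^{<ω} with |F(n)| ≤ n for all n, such that for every n there exists m ∈ [f(n), f(n+1)) with g(m) ∈ F(m). -/

import Mathlib

open scoped ENNReal Classical
open MeasureTheory

/-- Cantor space `2^ω`. -/
abbrev Cantor : Type := ℕ → Bool
/-- Baire space `ω^ω`. -/
abbrev Baire : Type := ℕ → ℕ

/-- The initial segment `x ↾ k` of a real, as a list. -/
def Cantor.initSeg (x : Cantor) (k : ℕ) : List Bool := List.ofFn (fun i : Fin k => x i)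

/-- The initial segment `f ↾ k` of an element of Baire space. -/
def Baire.initSeg (f : Baire) (k : ℕ) : List ℕ := List.ofFn (fun i : Fin k => f i)

/-- The basic clopen cylinder `[σ]` determined by a finite binary string. -/
def cylinder (σ : List Bool) : Set Cantor := {x | x.initSeg σ.length = σ}

/-- `μ` is the uniform (coin-flipping) measure on Cantor space: every cylinder
`[σ]` gets measure `2^{-|σ|}`.  (This characterizes the measure uniquely.) -/
def IsCantorMeasure (μ : Measure Cantor) : Prop :=
  ∀ σ : List Bool, μ (cylinder σ) = 2⁻¹ ^ σ.length

/-- `A` is recursively enumerable in the oracle `x : 2^ω`:  membership is witnessed by the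
halting of a partial recursive function on some initial segment of the oracle. -/
def REIn {α : Type} [Primcodable α] (x : Cantor) (A : Set α) : Prop :=
  ∃ ψ : α × List Bool →. Unit, Partrec ψ ∧ ∀ a, a ∈ A ↔ ∃ k, (ψ (a, x.initSeg k)).Dom

/-- A total function `f : ω → ω` is Turing reducible to `x` iff its graph is r.e. in `x`. -/
def TuringLEFun (f : ℕ → ℕ) (x : Cantor) : Prop :=
  ∃ ψ : ℕ × List Bool →. ℕ, Partrec ψ ∧ ∀ n m, f n = m ↔ ∃ k, m ∈ ψ (n, x.initSeg k)

/-- A real viewed as a function `ω → ω`. -/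
def Cantor.toFun (y : Cantor) : ℕ → ℕ := fun n => cond (y n) 1 0

/-- Turing reducibility `y ≤_T x` between reals. -/
def TuringLE (y x : Cantor) : Prop := TuringLEFun y.toFun x

/-- Turing equivalence `y ≡_T x`. -/
def TuringEquiv (y x : Cantor) : Prop := TuringLE y x ∧ TuringLE x y

/-- The halting set relative to the oracle `x` (a set Turing-equivalent to the jump `x'`):
`⟨e,n⟩` belongs to it iff the `e`-th partial recursive function halts on `(n, σ)`
for some initial segment `σ` of `x`. -/
def jumpSet (x : Cantor) : Set ℕ :=
  {e | ∃ k, ((Denumerable.ofNat Nat.Partrec.Code e.unpair.1).eval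
      (Nat.pair e.unpair.2 (Encodable.encode (x.initSeg k)))).Dom}

/-- The Turing jump `x'` of `x`, as a real. -/
noncomputable def Cantor.jump (x : Cantor) : Cantor :=
  fun n => if n ∈ jumpSet x then true else false

/-- `U ⊆ 2^ω` is `Σ⁰₁(x)`: an effectively open set relative to `x`. -/
def Sigma01In (x : Cantor) (U : Set Cantor) : Prop :=
  ∃ W : Set (List Bool), REIn x W ∧ U = ⋃ σ ∈ W, cylinder σ

/-- `C ⊆ 2^ω` is `Π⁰₁(x)`: an effectively closed set relative to `x`. -/
def Pi01In (x : Cantor) (C : Set Cantor) : Prop := Sigma01In x Cᶜ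

/-- `y` is `x`-Kurtz random: `y` avoids every `Π⁰₁(x)` null class. -/
def KurtzRandomIn (x : Cantor) (μ : Measure Cantor) (y : Cantor) : Prop :=
  ∀ C : Set Cantor, Pi01In x C → μ C = 0 → y ∉ C

/-- The trivial (recursive) oracle. -/
def recOracle : Cantor := fun _ => false

/-- `A ⊆ 2^ω` is `Π¹₁(x)` (lightface, relativized to `x`), via the Kleene normal form
`y ∈ A ↔ ∀ f ∃ n R(x↾n, y↾n, f↾n)` with `R` recursive. -/
def Pi11In (x : Cantor) (A : Set Cantor) : Prop :=
  ∃ R : List Bool × List Bool × List ℕ → Bool, Computable R ∧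
    ∀ y : Cantor, y ∈ A ↔ ∀ f : Baire, ∃ n, R (x.initSeg n, y.initSeg n, f.initSeg n) = true

/-- `A ⊆ 2^ω` is `Σ¹₁(x)` (lightface analytic relative to `x`). -/
def Sigma11In (x : Cantor) (A : Set Cantor) : Prop :=
  ∃ R : List Bool × List Bool × List ℕ → Bool, Computable R ∧
    ∀ y : Cantor, y ∈ A ↔ ∃ f : Baire, ∀ n, R (x.initSeg n, y.initSeg n, f.initSeg n) = true

/-- `A ⊆ 2^ω` is `Δ¹₁(x)` (hyperarithmetic in `x`). -/
def Delta11In (x : Cantor) (A : Set Cantor) : Prop := Pi11In x A ∧ Sigma11In x A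

abbrev Pi11 : Set Cantor → Prop := Pi11In recOracle
abbrev Sigma11 : Set Cantor → Prop := Sigma11In recOracle
abbrev Delta11 : Set Cantor → Prop := Delta11In recOracle

/-- `A ⊆ ω` is `Π¹₁(x)`. -/
def Pi11NatIn (x : Cantor) (A : Set ℕ) : Prop :=
  ∃ R : ℕ × List Bool × List ℕ → Bool, Computable R ∧
    ∀ a, a ∈ A ↔ ∀ f : Baire, ∃ n, R (a, x.initSeg n, f.initSeg n) = true

/-- `A ⊆ ω` is `Σ¹₁(x)`. -/
def Sigma11NatIn (x : Cantor) (A : Set ℕ) : Prop :=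
  ∃ R : ℕ × List Bool × List ℕ → Bool, Computable R ∧
    ∀ a, a ∈ A ↔ ∃ f : Baire, ∀ n, R (a, x.initSeg n, f.initSeg n) = true

abbrev Pi11Nat : Set ℕ → Prop := Pi11NatIn recOracle
abbrev Sigma11Nat : Set ℕ → Prop := Sigma11NatIn recOracle

/-- `A ⊆ ω` is `Δ¹₁`. -/
def Delta11Nat (A : Set ℕ) : Prop := Pi11Nat A ∧ Sigma11Nat A

/-- `A ⊆ ω` is `Σ¹₂`, via the normal form `∃ f ∀ g ∃ n R`. -/
def Sigma12Nat (A : Set ℕ) : Prop :=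
  ∃ R : ℕ × List ℕ × List ℕ → Bool, Computable R ∧
    ∀ a, a ∈ A ↔ ∃ f : Baire, ∀ g : Baire, ∃ n, R (a, f.initSeg n, g.initSeg n) = true

/-- `A ⊆ ω` is `Δ¹₂`. -/
def Delta12Nat (A : Set ℕ) : Prop := Sigma12Nat A ∧ Sigma12Nat Aᶜ

/-- Hyperarithmetic reducibility `y ≤_h x` between reals: `y` is `Δ¹₁(x)`. -/
def HypLE (y x : Cantor) : Prop :=
  Pi11NatIn x {n | y n = true} ∧ Pi11NatIn x {n | y n = false}

/-- Hyperarithmetic equivalence `x ≡_h y`. -/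
def HypEquiv (x y : Cantor) : Prop := HypLE x y ∧ HypLE y x

/-- `f ≤_h x` for a total function `f : ω → ω`: the graph of `f` is `Δ¹₁(x)`. -/
def HypLEFun (f : ℕ → ℕ) (x : Cantor) : Prop :=
  Pi11NatIn x {p | f p.unpair.1 = p.unpair.2} ∧ Pi11NatIn x {p | f p.unpair.1 ≠ p.unpair.2}

/-- A hyperarithmetic (`Δ¹₁`) real. -/
def Delta11Real (y : Cantor) : Prop := HypLE y recOracle

/-- A hyperarithmetic (`Δ¹₁`) function. -/
def Delta11Fun (f : ℕ → ℕ) : Prop := HypLEFun f recOracle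

/-- `y` is `Δ¹₁(x)`-Kurtz random: avoids every closed null `Δ¹₁(x)` set. -/
def Delta11KurtzRandomIn (x : Cantor) (μ : Measure Cantor) (y : Cantor) : Prop :=
  ∀ A : Set Cantor, Delta11In x A → IsClosed A → μ A = 0 → y ∉ A

/-- `y` is `Δ¹₁`-Kurtz random. -/
abbrev Delta11KurtzRandom (μ : Measure Cantor) (y : Cantor) : Prop :=
  Delta11KurtzRandomIn recOracle μ y

/-- `y` is `Π¹₁(x)`-Kurtz random: avoids every closed null `Π¹₁(x)` set. -/
def Pi11KurtzRandomIn (x : Cantor) (μ : Measure Cantor) (y : Cantor) : Prop :=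
  ∀ A : Set Cantor, Pi11In x A → IsClosed A → μ A = 0 → y ∉ A

/-- `y` is `Π¹₁`-Kurtz random. -/
abbrev Pi11KurtzRandom (μ : Measure Cantor) (y : Cantor) : Prop :=
  Pi11KurtzRandomIn recOracle μ y

/-- `y` is `Σ¹₁`-Kurtz random: avoids every closed null `Σ¹₁` set. -/
def Sigma11KurtzRandom (μ : Measure Cantor) (y : Cantor) : Prop :=
  ∀ A : Set Cantor, Sigma11 A → IsClosed A → μ A = 0 → y ∉ A

/-- `y` is `Π¹₁`-random: avoids every `Π¹₁` null set. -/
def Pi11Random (μ : Measure Cantor) (y : Cantor) : Prop :=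
  ∀ A : Set Cantor, Pi11 A → μ A = 0 → y ∉ A

/-- The ordinal `α` is the order type of a wellordering (of a subset of `ω`) recursive in `x`. -/
def OrdRecIn (x : Cantor) (α : Ordinal.{0}) : Prop :=
  ∃ R : ℕ → ℕ → Prop,
    TuringLEFun (fun p => if R p.unpair.1 p.unpair.2 then 1 else 0) x ∧
    ∃ inst : IsWellOrder {n : ℕ | ∃ m, R n m ∨ R m n}
        (fun a b : {n : ℕ | ∃ m, R n m ∨ R m n} => R a.1 b.1),
      α = @Ordinal.type _ (fun a b : {n : ℕ | ∃ m, R n m ∨ R m n} => R a.1 b.1) inst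

/-- `ω₁^x`: the least ordinal not (the order type of a wellordering) recursive in `x`. -/
noncomputable def omega1 (x : Cantor) : Ordinal := sInf {α : Ordinal | ¬ OrdRecIn x α}

/-- The Church–Kleene ordinal `ω₁^CK`. -/
noncomputable def omega1CK : Ordinal := omega1 recOracle

/-- `A ⊆ ω^ω` is (lightface) `Π¹₁`. -/
def Pi11Baire (A : Set Baire) : Prop :=
  ∃ R : List ℕ × List ℕ → Bool, Computable R ∧
    ∀ y, y ∈ A ↔ ∀ f : Baire, ∃ n, R (y.initSeg n, f.initSeg n) = true

/-- `x ∈ ω^ω` is a `Π¹₁` singleton. -/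
def Pi11Singleton (x : Baire) : Prop := Pi11Baire {x}

/-- An element of Baire space coded as a real (via the graph). -/
def Baire.toCantor (x : Baire) : Cantor := fun n => decide (x n.unpair.1 = n.unpair.2)

/-- `Q ⊆ ω × 2^ω` is `Π¹₁`. -/
def Pi11NatCantor (Q : Set (ℕ × Cantor)) : Prop :=
  ∃ R : ℕ × List Bool × List ℕ → Bool, Computable R ∧
    ∀ (a : ℕ) (x : Cantor),
      (a, x) ∈ Q ↔ ∀ f : Baire, ∃ n, R (a, x.initSeg n, f.initSeg n) = true

/-- `Q` is a universal `Π¹₁` subset of `ω × 2^ω`. -/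
def UniversalPi11 (Q : Set (ℕ × Cantor)) : Prop :=
  Pi11NatCantor Q ∧ ∀ A : Set Cantor, Pi11 A → ∃ n, A = {x | (n, x) ∈ Q}

/-- The set of codes `⟨n, σ⟩` with `μ(Q_n) = 0` and `σ ≺ x` for some `x ∈ Q_n`;
this codes all `Π¹₁` closed null sets. -/
def cSet (μ : Measure Cantor) (Q : Set (ℕ × Cantor)) : Set ℕ :=
  {p | μ {x : Cantor | (p.unpair.1, x) ∈ Q} = 0 ∧
    ∃ σ : List Bool, Encodable.encode σ = p.unpair.2 ∧
      ∃ x : Cantor, (p.unpair.1, x) ∈ Q ∧ x.initSeg σ.length = σ}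

/-- The real `𝔠` coding all `Π¹₁` closed null sets. -/
noncomputable def cReal (μ : Measure Cantor) (Q : Set (ℕ × Cantor)) : Cantor :=
  fun n => if n ∈ cSet μ Q then true else false

/-- `x` is `Δ¹₁`-dominated (hyp-dominated): every `f ≤_h x` is dominated by a
hyperarithmetic function. -/
def Delta11Dominated (x : Cantor) : Prop :=
  ∀ f : ℕ → ℕ, HypLEFun f x → ∃ g : ℕ → ℕ, Delta11Fun g ∧ ∀ n, f n < g n

/-- `x` is `Δ¹₁`-semi-traceable: every `f ≤_h x` agrees infinitely often with some
hyperarithmetic function. -/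
def Delta11SemiTraceable (x : Cantor) : Prop :=
  ∀ f : ℕ → ℕ, HypLEFun f x → ∃ g : ℕ → ℕ, Delta11Fun g ∧ {n | f n = g n}.Infinite

/-- A partial `Π¹₁` function: a partial function `ω ⇀ ω` with `Π¹₁` graph. -/
def PartialPi11 (p : ℕ →. ℕ) : Prop := Pi11Nat {q | q.unpair.2 ∈ p q.unpair.1}

/-- `x` is `Π¹₁`-semi-traceable: every `f ≤_h x` agrees infinitely often with some
partial `Π¹₁` function. -/
def Pi11SemiTraceable (x : Cantor) : Prop :=
  ∀ f : ℕ → ℕ, HypLEFun f x → ∃ p : ℕ →. ℕ, PartialPi11 p ∧ {n | f n ∈ p n}.Infinite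

/-- A uniformly `Δ¹₁` sequence of finite sets, coded as a `Δ¹₁` function. -/
def Delta11FinsetFun (T : ℕ → Finset ℕ) : Prop :=
  Delta11Fun (fun e => Encodable.encode (T e))

/-- `x` is `Δ¹₁`-traceable: for some (equivalently, every) monotone unbounded `Δ¹₁` bound `h`,
every `f ≤_h x` has a uniformly `Δ¹₁` trace `(T_e)` with `|T_e| ≤ h(e)` and `f(e) ∈ T_e`. -/
def Delta11Traceable (x : Cantor) : Prop :=
  ∃ h : ℕ → ℕ, Delta11Fun h ∧ Monotone h ∧ (∀ m, ∃ n, m ≤ h n) ∧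
    ∀ f : ℕ → ℕ, HypLEFun f x →
      ∃ T : ℕ → Finset ℕ, Delta11FinsetFun T ∧ (∀ e, (T e).card ≤ h e) ∧ ∀ e, f e ∈ T e

/-- `x` is low for `Δ¹₁`-Kurtz randomness. -/
def LowForDelta11Kurtz (μ : Measure Cantor) (x : Cantor) : Prop :=
  ∀ y : Cantor, Delta11KurtzRandomIn x μ y → Delta11KurtzRandom μ y

/-- `y` is `Δ¹₁(x)`-random: avoids every `Δ¹₁(x)` null set. -/
def Delta11RandomIn (x : Cantor) (μ : Measure Cantor) (y : Cantor) : Prop :=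
  ∀ A : Set Cantor, Delta11In x A → μ A = 0 → y ∉ A

/-- `x` is low for `Δ¹₁`-randomness. -/
def LowForDelta11Random (μ : Measure Cantor) (x : Cantor) : Prop :=
  ∀ y : Cantor, Delta11RandomIn x μ y → Delta11RandomIn recOracle μ y

/-- `x` is low for `Π¹₁`-Kurtz randomness. -/
def LowForPi11Kurtz (μ : Measure Cantor) (x : Cantor) : Prop :=
  ∀ y : Cantor, Pi11KurtzRandomIn x μ y → Pi11KurtzRandom μ y

/-- `x` is low for `Δ¹₁`-Kurtz tests: every `Δ¹₁(x)` open set of measure 1 contains a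
`Δ¹₁` open set of measure 1. -/
def LowForDelta11KurtzTests (μ : Measure Cantor) (x : Cantor) : Prop :=
  ∀ U : Set Cantor, Delta11In x U → IsOpen U → μ U = 1 →
    ∃ V : Set Cantor, Delta11 V ∧ IsOpen V ∧ V ⊆ U ∧ μ V = 1

/-- `δ¹₂`: the supremum of the order types of `Δ¹₂` wellorderings of `ω`. -/
noncomputable def delta12Ord : Ordinal :=
  sSup {α : Ordinal | ∃ R : ℕ → ℕ → Prop,
    Delta12Nat {p | R p.unpair.1 p.unpair.2} ∧
    ∃ inst : IsWellOrder ℕ R, α = @Ordinal.type _ R inst}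

/-- `m` is an output of the `e`-th partial recursive function on input `n`. -/
def codeEvalRel (e n m : ℕ) : Prop :=
  m ∈ (Denumerable.ofNat Nat.Partrec.Code e).eval n

mutual
/-- Membership in Kleene's `O` (the set of ordinal notations). -/
inductive KO : ℕ → Prop
  | one : KO 1
  | succ (a : ℕ) : KO a → KO (2 ^ a)
  | lim (e : ℕ) : (∀ n, ∃ m, codeEvalRel e n m) →
      (∀ n m, codeEvalRel e n m → KO m) →
      (∀ n m m', codeEvalRel e n m → codeEvalRel e (n + 1) m' → KOlt m m') →
      KO (3 * 5 ^ e)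
/-- The ordering `<_O` on Kleene's `O`. -/
inductive KOlt : ℕ → ℕ → Prop
  | lt_succ (a : ℕ) : KOlt a (2 ^ a)
  | lt_lim (e n m : ℕ) : codeEvalRel e n m → KOlt m (3 * 5 ^ e)
  | trans (a b c : ℕ) : KOlt a b → KOlt b c → KOlt a c
end

/-- Kleene's `O` as a real. -/
noncomputable def OReal : Cantor := fun n => if KO n then true else false

/-- A `Π¹₁`-ML-test for the measure `μ`. -/
def Pi11MLTest (μ : Measure Cantor) (G : ℕ → Set Cantor) : Prop :=
  (∀ m, IsOpen (G m)) ∧ (∀ m, μ (G m) ≤ 2⁻¹ ^ m) ∧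
  Pi11Nat {p | ∃ σ : List Bool,
    Encodable.encode σ = p.unpair.2 ∧ cylinder σ ⊆ G p.unpair.1}

/-- `x` is `Π¹₁`-ML-random. -/
def Pi11MLRandom (μ : Measure Cantor) (x : Cantor) : Prop :=
  ∀ G : ℕ → Set Cantor, Pi11MLTest μ G → x ∉ ⋂ m, G m

/-!
(1 ⇒ 2). Semi-traceability gives a `Δ¹₁` function `h` agreeing with `g` infinitely often. The
function sending `p` to the first agreement point after `p` is hyperarithmetic in `x`, so it is
dominated by a `Δ¹₁` function `d`; the points `0, d 0 + 1, …` of the orbit of `y ↦ y + d y + 1`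
cut `ω` into intervals each containing an agreement point `m`, which the trace `{h m}` catches.

(2 ⇒ 1). For domination, apply (2) to the running sums `Σ_{i ≤ m} f i`: some `m ≥ k` in
`[f k, f (k + 1))` has a trace `F m` containing a bound for `f k`, so summing all traces below
`f (k + 1)` gives a `Δ¹₁` bound. For semi-traceability, apply (2) to the function coding
`g ↾ (⟨m, m⟩ + 1)`: for infinitely many `m`, one of the at most `m` elements of `F m` is this
code, and reading its `i`-th element at `⟨m, i⟩` predicts `g` correctly there.

Everything that is hyperarithmetic in `x` comes from closure of `Π¹₁(x)` under computable
substitution, number quantifiers and bounded existential quantifiers.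
-/

theorem Computable.decide_exists_lt {α : Type} [Primcodable α] {N : α → ℕ} {p : α → ℕ → Bool}
    (hN : Computable N) (hp : Computable₂ p) :
    Computable fun a => decide (∃ i < N a, p a i = true) := by
  refine (Computable.nat_rec hN (Computable.const false)
    ((Primrec.or.to_comp.comp (Computable.snd.comp Computable.snd)
      (hp.comp Computable.fst (Computable.fst.comp Computable.snd))).to₂)).of_eq fun a => ?_
  induction N a with
  | zero => simp
  | succ n ih =>
    simp only [ih]
    rw [Bool.eq_iff_iff]
    simp only [Bool.or_eq_true, decide_eq_true_eq, Nat.exists_lt_succ_right]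

theorem Primrec.list_sum_nat : Primrec (List.sum : List ℕ → ℕ) :=
  (Primrec.list_foldr Primrec.id (Primrec.const 0) (Primrec.nat_add.comp
    (Primrec.fst.comp Primrec.snd) (Primrec.snd.comp Primrec.snd)).to₂).of_eq fun _ =>
    List.sum_eq_foldr.symm

theorem Finset.encode_eq_encode_sort (s : Finset ℕ) :
    Encodable.encode s = Encodable.encode (s.sort (· ≤ ·)) :=
  rfl

theorem Function.iterate_eq_of_eqOn_Iic {α : Type*} [Preorder α] {f g : α → α} {q : α}
    (hf : ∀ y, y ≤ f y) (hfg : ∀ y ≤ q, f y = g y) (a : α) :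
    ∀ n, f^[n] a ≤ q → g^[n] a = f^[n] a
  | 0, _ => rfl
  | n + 1, h => by
    have hn : f^[n] a ≤ q := (hf _).trans (Function.iterate_succ_apply' f n a ▸ h)
    rw [Function.iterate_succ_apply', Function.iterate_succ_apply',
      Function.iterate_eq_of_eqOn_Iic hf hfg a n hn, hfg _ hn]

theorem Function.iterate_eq_iff_of_eqOn_Iic {α : Type*} [Preorder α] {f g : α → α} {q : α}
    (hf : ∀ y, y ≤ f y) (hg : ∀ y, y ≤ g y) (hfg : ∀ y ≤ q, f y = g y) (a : α) (n : ℕ) :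
    f^[n] a = q ↔ g^[n] a = q :=
  ⟨fun h => (iterate_eq_of_eqOn_Iic hf hfg a n h.le).trans h,
    fun h => (iterate_eq_of_eqOn_Iic hg (fun y hy => (hfg y hy).symm) a n h.le).trans h⟩

theorem Cantor.initSeg_length (x : Cantor) (n : ℕ) : (x.initSeg n).length = n :=
  List.length_ofFn

theorem Cantor.initSeg_take (x : Cantor) {m n : ℕ} (h : m ≤ n) :
    (x.initSeg n).take m = x.initSeg m :=
  List.ext_getElem (by simp [Cantor.initSeg, h]) fun i _ _ => by simp [Cantor.initSeg]

theorem recOracle_initSeg (n : ℕ) : recOracle.initSeg n = (List.range n).map fun _ => false :=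
  List.ext_getElem (by simp [Cantor.initSeg]) fun i _ _ => by simp [Cantor.initSeg, recOracle]

namespace Baire

theorem initSeg_length (u : Baire) (n : ℕ) : (u.initSeg n).length = n :=
  List.length_ofFn

theorem initSeg_getD (u : Baire) {i n : ℕ} (h : i < n) : (u.initSeg n).getD i 0 = u i := by
  simp [Baire.initSeg, h]

theorem initSeg_take (u : Baire) {m n : ℕ} (h : m ≤ n) : (u.initSeg n).take m = u.initSeg m :=
  List.ext_getElem (by simp [Baire.initSeg, h]) fun i _ _ => by simp [Baire.initSeg]

theorem initSeg_succ (u : Baire) (n : ℕ) :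
    u.initSeg (n + 1) = u 0 :: Baire.initSeg (fun i => u (i + 1)) n :=
  List.ofFn_succ

theorem initSeg_eq_map_range (u : Baire) (n : ℕ) : u.initSeg n = (List.range n).map u :=
  List.ext_getElem (by simp [Baire.initSeg]) fun i _ _ => by simp [Baire.initSeg]

theorem forall_initSeg_iff {u : Baire} {P : List ℕ → Prop} :
    (∀ s, P (u.initSeg s)) ↔ ∀ L : List ℕ, (∃ i < L.length, u i ≠ L.getD i 0) ∨ P L := by
  refine ⟨fun h L => ?_, fun h s => ?_⟩
  · by_cases hpre : ∀ i < L.length, u i = L.getD i 0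
    · have hL : u.initSeg L.length = L :=
        List.ext_getElem (by simp [Baire.initSeg]) fun i h₁ h₂ => by
          simpa [← List.getD_eq_getElem _ 0 h₂, Baire.initSeg] using hpre i h₂
      exact Or.inr (hL ▸ h L.length)
    · push Not at hpre
      exact Or.inl hpre
  · rcases h (u.initSeg s) with ⟨i, hi, hne⟩ | hP
    · rw [initSeg_length] at hi
      exact absurd (u.initSeg_getD hi).symm hne
    · exact hP

end Baire

def columnPrefix (τ : List ℕ) (i m : ℕ) : List ℕ :=
  (List.range m).map fun j => τ.getD (Nat.pair i j) 0

theorem primrec_columnPrefix : Primrec fun p : List ℕ × ℕ × ℕ => columnPrefix p.1 p.2.1 p.2.2 := by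
  refine Primrec.list_map (Primrec.list_range.comp (Primrec.snd.comp Primrec.snd)) ?_
  exact ((Primrec.list_getD 0).comp (Primrec.fst.comp Primrec.fst)
    (Primrec₂.natPair.comp (Primrec.fst.comp (Primrec.snd.comp Primrec.fst)) Primrec.snd)).to₂

theorem columnPrefix_initSeg {F : Baire} {i m N : ℕ} (h : Nat.pair i m ≤ N) :
    columnPrefix (F.initSeg N) i m = Baire.initSeg (fun j => F (Nat.pair i j)) m := by
  rw [Baire.initSeg_eq_map_range _ m]
  exact List.map_congr_left fun j hj =>
    F.initSeg_getD ((Nat.pair_lt_pair_right i (List.mem_range.1 hj)).trans_le h)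

namespace Pi11NatIn

variable {x : Cantor}

theorem of_computable {p : ℕ → Bool} (hp : Computable p) : Pi11NatIn x {a | p a = true} :=
  ⟨fun q => p q.1, hp.comp Computable.fst,
    fun _ => ⟨fun h _ => ⟨0, h⟩, fun h => (h fun _ => 0).elim fun _ => id⟩⟩

theorem preimage {A : Set ℕ} (hA : Pi11NatIn x A) {r : ℕ → ℕ} (hr : Computable r) :
    Pi11NatIn x (r ⁻¹' A) := by
  obtain ⟨R, hR, hA⟩ := hA
  exact ⟨fun q => R (r q.1, q.2), hR.comp ((hr.comp .fst).pair .snd), fun a => hA (r a)⟩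

theorem ite {A B : Set ℕ} (hA : Pi11NatIn x A) (hB : Pi11NatIn x B) {c : ℕ → Bool}
    (hc : Computable c) : Pi11NatIn x {a | if c a then a ∈ A else a ∈ B} := by
  obtain ⟨RA, hRA, hA⟩ := hA
  obtain ⟨RB, hRB, hB⟩ := hB
  refine ⟨fun q => cond (c q.1) (RA q) (RB q), Computable.cond (hc.comp .fst) hRA hRB,
    fun a => ?_⟩
  cases h : c a <;> simp [h, hA, hB]

theorem of_recOracle {A : Set ℕ} (hA : Pi11NatIn recOracle A) : Pi11NatIn x A := by
  obtain ⟨R, hR, hA⟩ := hA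
  refine ⟨fun q => R (q.1, (List.range q.2.1.length).map fun _ => false, q.2.2), ?_, fun a => ?_⟩
  · open Primrec in
    exact hR.comp (pair fst (pair (list_map (list_range.comp (list_length.comp (fst.comp snd)))
      (const false).to₂) (snd.comp snd))).to_comp
  simp only [hA a, Cantor.initSeg_length, recOracle_initSeg]

/-- The head of the witness `F` is the value of the number quantifier, its tail the witness
for that value. -/
theorem forall_nat {A : Set ℕ} (hA : Pi11NatIn x A) :
    Pi11NatIn x {a | ∀ c, Nat.pair a c ∈ A} := by
  obtain ⟨R, hR, hA⟩ := hA
  refine ⟨fun q => decide (0 < q.2.2.length) &&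
      R (Nat.pair q.1 q.2.2.headI, q.2.1.take q.2.2.tail.length, q.2.2.tail), ?_, fun a => ?_⟩
  · open Primrec in
    have hτ : Primrec fun q : ℕ × List Bool × List ℕ => q.2.2 := snd.comp snd
    exact Primrec.and.to_comp.comp
      (nat_lt.comp (const 0) (list_length.comp hτ)).decide.to_comp
      (hR.comp (pair (Primrec₂.natPair.comp fst (list_headI.comp hτ))
        (pair (list_take.comp (list_length.comp (list_tail.comp hτ))
          (fst.comp snd)) (list_tail.comp hτ))).to_comp)
  constructor
  · intro h F
    obtain ⟨n, hn⟩ := (hA _).1 (h (F 0)) fun i => F (i + 1)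
    refine ⟨n + 1, ?_⟩
    simpa [Baire.initSeg_succ, Baire.initSeg_length, Cantor.initSeg_take] using hn
  · intro h c
    refine (hA _).2 fun f => ?_
    obtain ⟨N, hN⟩ := h fun k => k.casesOn c f
    cases N with
    | zero => simp [Baire.initSeg] at hN
    | succ n =>
      refine ⟨n, ?_⟩
      simpa [Baire.initSeg_succ, Baire.initSeg_length, Cantor.initSeg_take] using hN

/-- The witnesses against the finitely many alternatives `i < K a` are merged into the columns
of one witness. -/
theorem exists_lt {A : Set ℕ} (hA : Pi11NatIn x A) {K : ℕ → ℕ} (hK : Computable K) :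
    Pi11NatIn x {a | ∃ i < K a, Nat.pair a i ∈ A} := by
  obtain ⟨R, hR, hA⟩ := hA
  refine ⟨fun q => decide (∃ i < K q.1, ∃ m < q.2.1.length + 1,
      (decide (Nat.pair i m ≤ q.2.2.length) &&
        R (Nat.pair q.1 i, q.2.1.take m, columnPrefix q.2.2 i m)) = true), ?_, fun a => ?_⟩
  · open Primrec in
    have hQ : Primrec fun w : ((ℕ × List Bool × List ℕ) × ℕ) × ℕ => w.1.1 := fst.comp fst
    have hi : Primrec fun w : ((ℕ × List Bool × List ℕ) × ℕ) × ℕ => w.1.2 := snd.comp fst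
    have hτ : Primrec fun w : ((ℕ × List Bool × List ℕ) × ℕ) × ℕ => w.1.1.2.2 :=
      snd.comp (snd.comp hQ)
    have hinner : Computable₂ fun (q : ℕ × List Bool × List ℕ) (i : ℕ) =>
        decide (∃ m < q.2.1.length + 1, (decide (Nat.pair i m ≤ q.2.2.length) &&
          R (Nat.pair q.1 i, q.2.1.take m, columnPrefix q.2.2 i m)) = true) :=
      (Computable.decide_exists_lt (succ.comp (list_length.comp (fst.comp (snd.comp fst)))).to_comp
        (Primrec.and.to_comp.comp
          (nat_le.comp (Primrec₂.natPair.comp hi snd) (list_length.comp hτ)).decide.to_comp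
          (hR.comp (pair (Primrec₂.natPair.comp (fst.comp hQ) hi)
            (pair (list_take.comp snd (fst.comp (snd.comp hQ)))
              (primrec_columnPrefix.comp (pair hτ (pair hi snd))))).to_comp)).to₂).to₂
    exact (Computable.decide_exists_lt (hK.comp Computable.fst) hinner).of_eq fun q => by simp
  simp only [Bool.and_eq_true, decide_eq_true_eq, Cantor.initSeg_length, Baire.initSeg_length]
  constructor
  · rintro ⟨i, hi, hiA⟩ F
    obtain ⟨n, hn⟩ := (hA _).1 hiA fun j => F (Nat.pair i j)
    refine ⟨Nat.pair i n, i, hi, n, Nat.lt_succ_of_le (Nat.right_le_pair i n), le_rfl, ?_⟩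
    rwa [Cantor.initSeg_take _ (Nat.right_le_pair i n), columnPrefix_initSeg le_rfl]
  · intro h
    show ∃ i < K a, Nat.pair a i ∈ A
    by_contra! hnone
    have : ∀ i, ∃ f : Baire, i < K a → ∀ n, R (Nat.pair a i, x.initSeg n, f.initSeg n) ≠ true := by
      intro i
      by_cases hi : i < K a
      · simpa [hi, hA] using hnone i hi
      · exact ⟨0, fun h => absurd h hi⟩
    choose fs hfs using this
    obtain ⟨N, i, hi, m, hm, hmN, hR⟩ := h fun k => fs k.unpair.1 k.unpair.2
    refine hfs i hi m ?_
    simpa [Cantor.initSeg_take _ (Nat.le_of_lt_succ hm), columnPrefix_initSeg hmN] using hR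

theorem union {A B : Set ℕ} (hA : Pi11NatIn x A) (hB : Pi11NatIn x B) : Pi11NatIn x (A ∪ B) := by
  have h := ((hA.preimage (Computable.fst.comp Computable.unpair)).ite
    (hB.preimage (Computable.fst.comp Computable.unpair))
    (c := fun q => q.unpair.2 == 0) ?_).exists_lt (K := fun _ => 2) (Computable.const 2)
  · convert h using 1
    ext a
    simp [Nat.le_one_iff_eq_zero_or_eq_one, or_and_right, exists_or]
  · exact (Primrec.beq.comp (Primrec.snd.comp Primrec.unpair) (Primrec.const 0)).to_comp

theorem inter {A B : Set ℕ} (hA : Pi11NatIn x A) (hB : Pi11NatIn x B) : Pi11NatIn x (A ∩ B) := by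
  have h := ((hA.preimage (Computable.fst.comp Computable.unpair)).ite
    (hB.preimage (Computable.fst.comp Computable.unpair))
    (c := fun q => q.unpair.2 == 0) ?_).forall_nat
  · convert h using 1
    ext a
    simp only [Set.mem_inter_iff, Set.mem_preimage]
    refine ⟨fun h c => ?_, fun h => ⟨by simpa using h 0, by simpa using h 1⟩⟩
    cases c <;> simp [h.1, h.2]
  · exact (Primrec.beq.comp (Primrec.snd.comp Primrec.unpair) (Primrec.const 0)).to_comp

end Pi11NatIn

namespace HypLEFun

variable {x : Cantor}

theorem of_delta11 {u : ℕ → ℕ} (hu : Delta11Fun u) : HypLEFun u x :=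
  ⟨hu.1.of_recOracle, hu.2.of_recOracle⟩

theorem pi11NatIn_forall_initSeg {u : ℕ → ℕ} (hu : HypLEFun u x) {χ : ℕ → List ℕ → Bool}
    (hχ : Computable₂ χ) : Pi11NatIn x {a | ∀ s, χ a (Baire.initSeg u s) = true} := by
  let L : ℕ → List ℕ := Denumerable.ofNat (List ℕ)
  have hL : Primrec L := Primrec.ofNat _
  have hLq : Primrec fun q : ℕ => L q.unpair.1.unpair.2 :=
    hL.comp (Primrec.snd.comp (Primrec.unpair.comp (Primrec.fst.comp Primrec.unpair)))
  have hi : Primrec fun q : ℕ => q.unpair.2 := Primrec.snd.comp Primrec.unpair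
  -- `q = ⟨⟨a, c⟩, i⟩`: the `i`-th entry of the list coded by `c` is wrong, or `i` is past its end
  -- and `χ a` holds of it
  have hC := (hu.2.preimage (r := fun q => Nat.pair q.unpair.2 ((L q.unpair.1.unpair.2).getD
      q.unpair.2 0)) ?_).ite (Pi11NatIn.of_computable
      (p := fun q => χ q.unpair.1.unpair.1 (L q.unpair.1.unpair.2)) ?_)
      (c := fun q => decide (q.unpair.2 < (L q.unpair.1.unpair.2).length)) ?_
  · have h := (hC.exists_lt (K := fun p => (L p.unpair.2).length + 1) ?_).forall_nat
    · convert h using 1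
      ext a
      simp only [Set.mem_ofPred_eq, Set.mem_preimage, Nat.unpair_pair, decide_eq_true_eq,
        Nat.exists_lt_succ_right, lt_irrefl, if_false]
      have hif : ∀ l : List ℕ, (∃ i < l.length,
          if i < l.length then u i ≠ l.getD i 0 else χ a l = true) ↔
          ∃ i < l.length, u i ≠ l.getD i 0 :=
        fun l => exists_congr fun i => and_congr_right fun hi => by rw [if_pos hi]
      rw [Baire.forall_initSeg_iff (P := fun l => χ a l = true)]
      simp only [hif]
      refine ⟨fun h c => h _, fun h l => ?_⟩
      simpa only [L, Denumerable.ofNat_encode] using h (Encodable.encode l)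
    · exact (Primrec.succ.comp (Primrec.list_length.comp
        (hL.comp (Primrec.snd.comp Primrec.unpair)))).to_comp
  · exact (Primrec₂.natPair.comp hi ((Primrec.list_getD 0).comp hLq hi)).to_comp
  · exact hχ.comp (Primrec.fst.comp (Primrec.unpair.comp
      (Primrec.fst.comp Primrec.unpair))).to_comp hLq.to_comp
  · exact (Primrec.nat_lt.comp hi (Primrec.list_length.comp hLq)).decide.to_comp

theorem pi11NatIn_initSeg {u : ℕ → ℕ} (hu : HypLEFun u x) {ℓ : ℕ → ℕ} (hℓ : Computable ℓ)
    {ψ : ℕ → List ℕ → Bool} (hψ : Computable₂ ψ) :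
    Pi11NatIn x {a | ψ a (Baire.initSeg u (ℓ a)) = true} := by
  have h := hu.pi11NatIn_forall_initSeg
    (χ := fun a L => decide (L.length < ℓ a) || ψ a (L.take (ℓ a)))
    (Primrec.or.to_comp.comp
      (Primrec.nat_lt.decide.to_comp.comp (Computable.list_length.comp .snd) (hℓ.comp .fst))
      (hψ.comp .fst (Primrec.list_take.to_comp.comp (hℓ.comp .fst) .snd)))
  convert h using 1
  ext a
  simp only [Set.mem_ofPred_eq, Bool.or_eq_true, decide_eq_true_eq, Baire.initSeg_length]
  constructor
  · intro h s
    rcases lt_or_ge s (ℓ a) with hs | hs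
    · exact Or.inl hs
    · exact Or.inr (by rwa [Baire.initSeg_take u hs])
  · intro h
    simpa [Baire.initSeg_take] using h (ℓ a)

theorem of_graph_initSeg {u g : ℕ → ℕ} (hu : HypLEFun u x) {ℓ : ℕ × ℕ → ℕ} (hℓ : Computable ℓ)
    {ψ : ℕ × ℕ → List ℕ → Bool} (hψ : Computable₂ ψ)
    (h : ∀ n m, g n = m ↔ ψ (n, m) (Baire.initSeg u (ℓ (n, m))) = true) : HypLEFun g x := by
  have hℓ' := hℓ.comp Computable.unpair
  constructor
  · convert hu.pi11NatIn_initSeg hℓ' (hψ.comp (Computable.unpair.comp .fst) .snd).to₂ using 1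
    ext p
    exact h _ _
  · convert hu.pi11NatIn_initSeg hℓ' (Primrec.not.to_comp.comp
      (hψ.comp (Computable.unpair.comp .fst) .snd)).to₂ using 1
    ext p
    simp [h]

theorem of_eq_initSeg {u g : ℕ → ℕ} (hu : HypLEFun u x) {ℓ : ℕ → ℕ} (hℓ : Computable ℓ)
    {val : ℕ → List ℕ → ℕ} (hval : Computable₂ val)
    (h : ∀ n, g n = val n (Baire.initSeg u (ℓ n))) : HypLEFun g x :=
  hu.of_graph_initSeg (ℓ := fun p => ℓ p.1) (hℓ.comp .fst) (ψ := fun p L => val p.1 L == p.2)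
    (Primrec.beq.to_comp.comp (hval.comp (Computable.fst.comp .fst) .snd)
      (Computable.snd.comp .fst)) (by simp [h])

theorem comp {u v : ℕ → ℕ} (hu : HypLEFun u x) (hv : HypLEFun v x) : HypLEFun (u ∘ v) x := by
  have key : ∀ {P : ℕ → ℕ → Prop}, Pi11NatIn x {p | P p.unpair.1 p.unpair.2} →
      Pi11NatIn x {p | P (v p.unpair.1) p.unpair.2} := by
    intro P hP
    have h := ((hv.2.preimage (r := fun q => Nat.pair q.unpair.1.unpair.1 q.unpair.2) ?_).union
      (hP.preimage (r := fun q => Nat.pair q.unpair.2 q.unpair.1.unpair.2) ?_)).forall_nat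
    · convert h using 1
      ext p
      simp only [Set.mem_ofPred_eq, Set.mem_union, Set.mem_preimage, Nat.unpair_pair]
      refine ⟨fun h w => ?_, fun h => (h _).resolve_left fun hne => hne rfl⟩
      rcases eq_or_ne (v p.unpair.1) w with rfl | hne
      exacts [Or.inr h, Or.inl hne]
    · exact (Primrec₂.natPair.comp (Primrec.fst.comp (Primrec.unpair.comp
        (Primrec.fst.comp Primrec.unpair))) (Primrec.snd.comp Primrec.unpair)).to_comp
    · exact (Primrec₂.natPair.comp (Primrec.snd.comp Primrec.unpair) (Primrec.snd.comp
        (Primrec.unpair.comp (Primrec.fst.comp Primrec.unpair)))).to_comp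
  exact ⟨key (P := fun a b => u a = b) hu.1, key (P := fun a b => u a ≠ b) hu.2⟩

theorem pair {u₁ u₂ : ℕ → ℕ} (h₁ : HypLEFun u₁ x) (h₂ : HypLEFun u₂ x) :
    HypLEFun (fun n => Nat.pair (u₁ n) (u₂ n)) x := by
  have hr₁ : Computable fun p : ℕ => Nat.pair p.unpair.1 p.unpair.2.unpair.1 :=
    (Primrec₂.natPair.comp (Primrec.fst.comp Primrec.unpair)
      (Primrec.fst.comp (Primrec.unpair.comp (Primrec.snd.comp Primrec.unpair)))).to_comp
  have hr₂ : Computable fun p : ℕ => Nat.pair p.unpair.1 p.unpair.2.unpair.2 :=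
    (Primrec₂.natPair.comp (Primrec.fst.comp Primrec.unpair)
      (Primrec.snd.comp (Primrec.unpair.comp (Primrec.snd.comp Primrec.unpair)))).to_comp
  have hiff : ∀ a b m : ℕ, Nat.pair a b = m ↔ a = m.unpair.1 ∧ b = m.unpair.2 := by
    intro a b m
    constructor
    · rintro rfl
      simp
    · rintro ⟨rfl, rfl⟩
      exact Nat.pair_unpair m
  constructor
  · convert (h₁.1.preimage hr₁).inter (h₂.1.preimage hr₂) using 1
    ext p
    simp [hiff]
  · convert (h₁.2.preimage hr₁).union (h₂.2.preimage hr₂) using 1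
    ext p
    simp [hiff, imp_iff_not_or]

theorem iterate_add_succ {d : ℕ → ℕ} (hd : HypLEFun d x) :
    HypLEFun (fun n => (fun y => y + d y + 1)^[n] 0) x := by
  refine hd.of_graph_initSeg (ℓ := fun p => p.2 + 1)
    (ψ := fun p L => decide ((fun y => y + L.getD y 0 + 1)^[p.1] 0 = p.2)) ?_ ?_ fun n q => ?_
  · exact (Primrec.succ.comp Primrec.snd).to_comp
  · exact (Primrec.eq.comp (Primrec.nat_iterate (Primrec.fst.comp Primrec.fst) (Primrec.const 0)
      (Primrec.succ.comp (Primrec.nat_add.comp Primrec.snd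
        ((Primrec.list_getD 0).comp (Primrec.snd.comp Primrec.fst) Primrec.snd))).to₂)
      (Primrec.snd.comp Primrec.fst)).decide.to_comp
  simp only [decide_eq_true_eq]
  refine Function.iterate_eq_iff_of_eqOn_Iic (by omega) (by omega) (fun y hy => ?_) 0 n
  rw [Baire.initSeg_getD d (Nat.lt_succ_of_le hy)]

theorem find_agree_gt {g h : ℕ → ℕ} (hg : HypLEFun g x) (hh : HypLEFun h x)
    (hinf : {n | g n = h n}.Infinite) : HypLEFun (fun p => Nat.find (hinf.exists_gt p)) x := by
  let agree : List ℕ → ℕ → Bool := fun L k => (L.getD k 0).unpair.1 == (L.getD k 0).unpair.2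
  have hagree : Primrec₂ agree := Primrec.beq.comp₂
    (Primrec.fst.comp₂ (Primrec.unpair.comp₂ (Primrec.list_getD 0)))
    (Primrec.snd.comp₂ (Primrec.unpair.comp₂ (Primrec.list_getD 0)))
  refine (hg.pair hh).of_graph_initSeg (ℓ := fun p => p.2 + 1)
    (ψ := fun p L => decide (p.1 < p.2) && agree L p.2 &&
      !decide (∃ k < p.2, (decide (p.1 < k) && agree L k) = true)) ?_ ?_ fun p q => ?_
  · exact (Primrec.succ.comp Primrec.snd).to_comp
  · open Primrec in
    exact Primrec.and.to_comp.comp (Primrec.and.to_comp.comp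
      (nat_lt.comp (fst.comp fst) (snd.comp fst)).decide.to_comp
      (hagree.comp snd (snd.comp fst)).to_comp)
      (Primrec.not.to_comp.comp (Computable.decide_exists_lt (snd.comp fst).to_comp
        (Primrec.and.comp (nat_lt.comp (fst.comp (fst.comp fst)) snd).decide
          (hagree.comp (snd.comp fst) snd)).to_comp.to₂))
  have hL : ∀ k ≤ q, agree (Baire.initSeg (fun n => Nat.pair (g n) (h n)) (q + 1)) k = true ↔
      g k = h k := fun k hk => by
    simp only [agree, Baire.initSeg_getD _ (Nat.lt_succ_of_le hk), Nat.unpair_pair, beq_iff_eq]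
  rw [Nat.find_eq_iff]
  simp only [Bool.and_eq_true, Bool.not_eq_true', decide_eq_false_iff_not, decide_eq_true_eq,
    hL q le_rfl, Set.mem_ofPred_eq]
  constructor
  · rintro ⟨⟨hq, hpq⟩, hmin⟩
    exact ⟨⟨hpq, hq⟩, fun ⟨k, hk, hpk, hag⟩ => hmin k hk ⟨(hL k hk.le).1 hag, hpk⟩⟩
  · rintro ⟨⟨hpq, hq⟩, hnone⟩
    exact ⟨⟨hq, hpq⟩, fun k hk ⟨hag, hpk⟩ => hnone ⟨k, hk, hpk, (hL k hk.le).2 hag⟩⟩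

end HypLEFun

theorem Delta11FinsetFun.ite_zero_singleton {h : ℕ → ℕ} (hh : Delta11Fun h) :
    Delta11FinsetFun fun m => if m = 0 then ∅ else {h m} := by
  unfold Delta11FinsetFun
  refine hh.of_eq_initSeg (ℓ := (· + 1)) Computable.succ
    (val := fun m L => Encodable.encode (if m = 0 then [] else [L.getD m 0])) ?_ fun m => ?_
  · exact (Primrec.encode.comp (Primrec.ite (Primrec.eq.comp Primrec.fst (Primrec.const 0))
      (Primrec.const []) (Primrec.list_cons.comp ((Primrec.list_getD 0).comp Primrec.snd
        Primrec.fst) (Primrec.const [])))).to_comp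
  rw [Finset.encode_eq_encode_sort, Baire.initSeg_getD h (Nat.lt_succ_self m)]
  dsimp only
  split_ifs <;> simp

def IsIntervalTraced (g : ℕ → ℕ) : Prop :=
  ∃ f : ℕ → ℕ, ∃ F : ℕ → Finset ℕ,
    Delta11Fun f ∧ StrictMono f ∧ Delta11FinsetFun F ∧ (∀ n, (F n).card ≤ n) ∧
    ∀ n : ℕ, ∃ m : ℕ, f n ≤ m ∧ m < f (n + 1) ∧ g m ∈ F m

theorem isIntervalTraced_of_semiTraceable_of_dominated {x : Cantor}
    (hST : Delta11SemiTraceable x) (hD : Delta11Dominated x) {g : ℕ → ℕ} (hg : HypLEFun g x) :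
    IsIntervalTraced g := by
  obtain ⟨h, hh, hinf⟩ := hST g hg
  obtain ⟨d, hd, hdom⟩ := hD _ (hg.find_agree_gt (.of_delta11 hh) hinf)
  let f : ℕ → ℕ := fun n => (fun y => y + d y + 1)^[n] 0
  have hf_succ : ∀ n, f (n + 1) = f n + d (f n) + 1 := fun n =>
    Function.iterate_succ_apply' _ n 0
  refine ⟨f, fun m => if m = 0 then ∅ else {h m}, hd.iterate_add_succ,
    strictMono_nat_of_lt_succ fun n => by rw [hf_succ]; omega, .ite_zero_singleton hh,
    fun m => by dsimp only; split_ifs <;> simp [Nat.one_le_iff_ne_zero, *], fun n => ?_⟩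
  obtain ⟨hagree, hlt⟩ := Nat.find_spec (hinf.exists_gt (f n))
  have := hdom (f n)
  rw [hf_succ]
  exact ⟨_, hlt.le, by omega, by simpa [(Nat.zero_le _).trans_lt hlt |>.ne'] using hagree⟩

theorem delta11Dominated_of_forall_isIntervalTraced {x : Cantor}
    (H : ∀ g : ℕ → ℕ, HypLEFun g x → IsIntervalTraced g) : Delta11Dominated x := by
  intro f₀ hf₀
  obtain ⟨f, F, hf, hf_mono, hF, -, hhit⟩ := H (fun m => (Baire.initSeg f₀ (m + 1)).sum)
    (hf₀.of_eq_initSeg Computable.succ (val := fun _ L => L.sum)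
      (Primrec.list_sum_nat.comp Primrec.snd).to_comp fun _ => rfl)
  let B : ℕ → ℕ := fun n => ((List.range n).map fun m => ((F m).sort (· ≤ ·)).sum).sum
  have hB : Delta11Fun fun n => B n + 1 := by
    refine HypLEFun.of_eq_initSeg (u := fun e => Encodable.encode (F e)) hF (ℓ := id) Computable.id
      (val := fun _ L => (L.map fun c => (Denumerable.ofNat (List ℕ) c).sum).sum + 1) ?_ fun n => ?_
    · exact (Primrec.succ.comp (Primrec.list_sum_nat.comp (Primrec.list_map Primrec.snd
        (Primrec.list_sum_nat.comp ((Primrec.ofNat _).comp Primrec.snd)).to₂))).to_comp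
    · simp [B, Baire.initSeg_eq_map_range, Finset.encode_eq_encode_sort, Function.comp_def]
  have hf_succ : Delta11Fun fun k => f (k + 1) :=
    hf.of_eq_initSeg (ℓ := (· + 2)) (Primrec.succ.comp Primrec.succ).to_comp
      (val := fun k L => L.getD (k + 1) 0)
      ((Primrec.list_getD 0).comp Primrec.snd (Primrec.succ.comp Primrec.fst)).to_comp
      fun k => (Baire.initSeg_getD f (by omega)).symm
  refine ⟨(fun n => B n + 1) ∘ fun k => f (k + 1), hB.comp hf_succ, fun k => ?_⟩
  obtain ⟨m, hm₁, hm₂, hmem⟩ := hhit k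
  have hkm : k ≤ m := hf_mono.le_apply.trans hm₁
  calc f₀ k ≤ (Baire.initSeg f₀ (m + 1)).sum := List.le_sum_of_mem
        (by simpa [Baire.initSeg_eq_map_range] using ⟨k, hkm, rfl⟩)
    _ ≤ ((F m).sort (· ≤ ·)).sum := List.le_sum_of_mem ((Finset.mem_sort _).2 hmem)
    _ ≤ B (f (k + 1)) := List.le_sum_of_mem (List.mem_map_of_mem (List.mem_range.2 hm₂))
    _ < B (f (k + 1)) + 1 := Nat.lt_succ_self _

theorem delta11SemiTraceable_of_forall_isIntervalTraced {x : Cantor}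
    (H : ∀ g : ℕ → ℕ, HypLEFun g x → IsIntervalTraced g) : Delta11SemiTraceable x := by
  intro g₀ hg₀
  obtain ⟨f, F, -, hf_mono, hF, hcard, hhit⟩ :=
    H (fun m => Encodable.encode (Baire.initSeg g₀ (Nat.pair m m + 1)))
      (hg₀.of_eq_initSeg (ℓ := fun m => Nat.pair m m + 1)
        (Primrec.succ.comp (Primrec₂.natPair.comp Primrec.id Primrec.id)).to_comp
        (val := fun _ L => Encodable.encode L) (Primrec.encode.comp Primrec.snd).to_comp
        fun _ => rfl)
  refine ⟨fun j => (Denumerable.ofNat (List ℕ)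
    (((F j.unpair.1).sort (· ≤ ·)).getD j.unpair.2 0)).getD j 0, ?_, ?_⟩
  · refine HypLEFun.of_eq_initSeg (u := fun e => Encodable.encode (F e)) hF
      (ℓ := fun j => j.unpair.1 + 1) (Primrec.succ.comp (Primrec.fst.comp Primrec.unpair)).to_comp
      (val := fun j L => (Denumerable.ofNat (List ℕ) ((Denumerable.ofNat (List ℕ)
        (L.getD j.unpair.1 0)).getD j.unpair.2 0)).getD j 0) ?_ fun j => ?_
    · have hL := Primrec.ofNat (List ℕ)
      exact ((Primrec.list_getD 0).comp (hL.comp ((Primrec.list_getD 0).comp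
        (hL.comp ((Primrec.list_getD 0).comp Primrec.snd
          (Primrec.fst.comp (Primrec.unpair.comp Primrec.fst))))
        (Primrec.snd.comp (Primrec.unpair.comp Primrec.fst)))) Primrec.fst).to_comp
    · rw [Baire.initSeg_getD _ (Nat.lt_succ_self _), Finset.encode_eq_encode_sort,
        Denumerable.ofNat_encode]
  · refine Set.infinite_of_forall_exists_gt fun a => ?_
    obtain ⟨m, hm, -, hmem⟩ := hhit (a + 1)
    obtain ⟨i, hi, hget⟩ := List.mem_iff_getElem.1 ((Finset.mem_sort (· ≤ ·)).2 hmem)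
    have him : i < m := hi.trans_le ((Finset.length_sort _).trans_le (hcard m))
    refine ⟨Nat.pair m i, ?_, ?_⟩
    · simp only [Set.mem_ofPred_eq, Nat.unpair_pair, List.getD_eq_getElem _ _ hi, hget,
        Denumerable.ofNat_encode, Baire.initSeg_getD _
          (Nat.lt_succ_of_le (Nat.pair_lt_pair_right m him).le)]
    · have := hf_mono.le_apply.trans hm
      have := Nat.left_le_pair m i
      omega

/-- `x` is `Δ¹₁`-semi-traceable and `Δ¹₁`-dominated iff for every `g ≤_h x`
there are an increasing `Δ¹₁` function `f` and a `Δ¹₁` function `F : ω → [ω]^{<ω}` with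
`|F(n)| ≤ n` such that every interval `[f(n), f(n+1))` contains some `m` with `g(m) ∈ F(m)`. -/
theorem stmt15 (x : Cantor) :
    (Delta11SemiTraceable x ∧ Delta11Dominated x) ↔
      ∀ g : ℕ → ℕ, HypLEFun g x →
        ∃ f : ℕ → ℕ, ∃ F : ℕ → Finset ℕ,
          Delta11Fun f ∧ StrictMono f ∧ Delta11FinsetFun F ∧ (∀ n, (F n).card ≤ n) ∧
          ∀ n : ℕ, ∃ m : ℕ, f n ≤ m ∧ m < f (n + 1) ∧ g m ∈ F m :=
  ⟨fun ⟨hST, hD⟩ _ hg => isIntervalTraced_of_semiTraceable_of_dominated hST hD hg,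
    fun H => ⟨delta11SemiTraceable_of_forall_isIntervalTraced H,
      delta11Dominated_of_forall_isIntervalTraced H⟩⟩
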